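/- Let A be a commutative Noetherian ring and let B be a commutative A-algebra that is essentially of finite type and formally smooth over A (i.e. B is essentially smooth over A). Then the module of Kähler differentials Ω¹_{B/A} is a finitely generated projective B-module. -/

import Mathlib

universe u

/- Mathlib defines formal smoothness as `Ω[B⁄A]` projective together with `H¹(L_{B/A}) = 0`,
which is equivalent to the infinitesimal lifting property (Stacks 031J); finiteness of
`Ω[B⁄A]` holds for every essentially finite type algebra. -/
theorem kaehler_finite_projective_of_essSmooth_general
    (A B : Type u) [CommRing A] [CommRing B] [Algebra A B]
    [Algebra.EssFiniteType A B] [Algebra.FormallySmooth A B] :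
    Module.Finite B (Ω[B⁄A]) ∧ Module.Projective B (Ω[B⁄A]) :=
  ⟨KaehlerDifferential.finite A B, Algebra.FormallySmooth.projective_kaehlerDifferential⟩

/-- Let `A` be a commutative Noetherian ring and `B` a commutative
`A`-algebra which is essentially of finite type and formally smooth over `A`
(i.e. `B` is essentially smooth over `A`).  Then the module of Kähler differentials
`Ω[B⁄A]` is a finitely generated projective `B`-module. -/
theorem kaehler_finite_projective_of_essSmooth
    (A B : Type u) [CommRing A] [IsNoetherianRing A] [CommRing B] [Algebra A B]
    [Algebra.EssFiniteType A B] [Algebra.FormallySmooth A B] :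
    Module.Finite B (Ω[B⁄A]) ∧ Module.Projective B (Ω[B⁄A]) :=
  kaehler_finite_projective_of_essSmooth_general A B
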